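/- For every h ∈ ℝ and every ξ, Π ∈ ℝ³, the Cayley transform intertwines the two dual trivialized derivatives: cay(hξ̂) · (Π − (h/2)ξ×Π − (h²/4)(ξ·Π)ξ) = Π + (h/2)ξ×Π − (h²/4)(ξ·Π)ξ, i.e. cay(hξ̂)·d⁻(h,ξ,Π) = d⁺(h,ξ,Π). (This is the identity Ad*_{τ(hξ)}[d_{τ⁻¹(g)}τ⁻¹]*μ = [d_{−τ⁻¹(g)}τ⁻¹]*μ for the Cayley retraction on SO(3).) -/

import Mathlib

open Matrix

noncomputable section

/-- The hat map: the 3×3 skew-symmetric matrix `ξ̂` with `ξ̂ v = ξ × v`. -/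
def hat (ξ : Fin 3 → ℝ) : Matrix (Fin 3) (Fin 3) ℝ :=
  !![0, -ξ 2, ξ 1; ξ 2, 0, -ξ 0; -ξ 1, ξ 0, 0]

/-- The Cayley transform `cay(hξ̂) = (I − (h/2)ξ̂)⁻¹ (I + (h/2)ξ̂)`. -/
def cay (h : ℝ) (ξ : Fin 3 → ℝ) : Matrix (Fin 3) (Fin 3) ℝ :=
  (1 - (h / 2) • hat ξ)⁻¹ * (1 + (h / 2) • hat ξ)

/-- `d⁺(h,ξ,Π) = Π + (h/2) ξ×Π − (h²/4)(ξ·Π)ξ`. -/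
def dplus (h : ℝ) (ξ Pv : Fin 3 → ℝ) : Fin 3 → ℝ :=
  Pv + (h / 2) • (ξ ⨯₃ Pv) - (h ^ 2 / 4 * (ξ ⬝ᵥ Pv)) • ξ

/-- `d⁻(h,ξ,Π) = Π − (h/2) ξ×Π − (h²/4)(ξ·Π)ξ`. -/
def dminus (h : ℝ) (ξ Pv : Fin 3 → ℝ) : Fin 3 → ℝ :=
  Pv - (h / 2) • (ξ ⨯₃ Pv) - (h ^ 2 / 4 * (ξ ⬝ᵥ Pv)) • ξ

/-! Write `A = (h/2) ξ̂`, so `A v = (h/2) ξ × v` and `A ξ = 0`. Expanding, both `(I − A) d⁺` and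
`(I + A) d⁻` equal `Π − A²Π − (h²/4)(ξ·Π) ξ`; and `I − A` is invertible because
`det (I − A) = 1 + (h/2)² |ξ|² > 0`. -/

theorem hat_mulVec (ξ v : Fin 3 → ℝ) : hat ξ *ᵥ v = ξ ⨯₃ v := by
  ext i
  fin_cases i <;> simp [hat, cross_apply, mulVec, dotProduct, Fin.sum_univ_three] <;> ring

theorem det_one_sub_smul_hat (t : ℝ) (ξ : Fin 3 → ℝ) :
    (1 - t • hat ξ).det = 1 + t ^ 2 * (ξ ⬝ᵥ ξ) := by
  simp [hat, det_fin_three, dotProduct, Fin.sum_univ_three]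
  ring

theorem isUnit_det_one_sub_smul_hat (t : ℝ) (ξ : Fin 3 → ℝ) : IsUnit (1 - t • hat ξ).det := by
  have hξ : 0 ≤ ξ ⬝ᵥ ξ := dotProduct_self_star_nonneg ξ
  rw [det_one_sub_smul_hat, isUnit_iff_ne_zero]
  positivity

theorem one_sub_smul_hat_mulVec_dplus (h : ℝ) (ξ Pv : Fin 3 → ℝ) :
    (1 - (h / 2) • hat ξ) *ᵥ dplus h ξ Pv = (1 + (h / 2) • hat ξ) *ᵥ dminus h ξ Pv := by
  simp only [sub_mulVec, add_mulVec, one_mulVec, smul_mulVec, hat_mulVec, dplus, dminus,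
    map_add, map_sub, map_smul, cross_self]
  module

/-- For every `h ∈ ℝ` and `ξ, Π ∈ ℝ³`, the Cayley transform intertwines the
two dual trivialized derivatives: `cay(hξ̂) · d⁻(h,ξ,Π) = d⁺(h,ξ,Π)`.  This is the
identity `Ad*_{τ(hξ)} [d_{τ⁻¹(g)}τ⁻¹]*μ = [d_{−τ⁻¹(g)}τ⁻¹]*μ` for the Cayley
retraction on `SO(3)`. -/
theorem cay_mulVec_dminus_eq_dplus (h : ℝ) (ξ Pv : Fin 3 → ℝ) :
    (cay h ξ).mulVec (dminus h ξ Pv) = dplus h ξ Pv := by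
  rw [cay, ← mulVec_mulVec, ← one_sub_smul_hat_mulVec_dplus, mulVec_mulVec,
    nonsing_inv_mul _ (isUnit_det_one_sub_smul_hat _ ξ), one_mulVec]
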